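/- arXiv:2411.02613 — 4 statements merged into one kernel-verified Lean document; each statement's English description precedes it below -/
import Mathlib

section
/- Let (X, ρ, μ) be a space of homogeneous type with lower dimension d (i.e., (R/r)^d ≲ V(x,R)/V(x,r)) and covering dimension Δ' (i.e., every ball B(x,R) can be covered by at most C'(R/r)^{Δ'} balls of radius r). Then d ≤ Δ'. -/
open Set MeasureTheory
open scoped ENNReal NNReal

/-!
Cover `B(x, t)`, `t ≥ 1`, by at most `Cc t^Δ'` unit balls. A unit ball `B(y, 1)` meeting `B(x, t)`
satisfies `B(y, t) ⊆ B(x, K t)` with `K = A₀(2A₀ + 1)`, so by the lower dimension and doubling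
`μ(B(y, 1)) ≤ cl⁻¹ t⁻ᵈ μ(B(x, K t)) ≲ t⁻ᵈ μ(B(x, t))`. Summing, `μ(B(x, t)) ≲ t^(Δ' - d) μ(B(x, t))`,
so `t^(d - Δ')` stays bounded as `t → ∞`.
-/

def qball {X : Type*} (ρ : X → X → ℝ) (x : X) (r : ℝ) : Set X := {y | ρ x y < r}

lemma le_of_forall_one_le_mul_rpow_le {a b c C : ℝ} (hc : 0 < c)
    (h : ∀ t : ℝ, 1 ≤ t → c * t ^ a ≤ C * t ^ b) : a ≤ b := by
  by_contra! hba
  obtain ⟨t, ht1, htC⟩ := ((Filter.eventually_ge_atTop 1).and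
    ((tendsto_rpow_atTop (sub_pos.2 hba)).eventually_gt_atTop (C / c))).exists
  have ht0 : 0 < t := one_pos.trans_le ht1
  have hsplit : t ^ a = t ^ (a - b) * t ^ b := by
    rw [← Real.rpow_add ht0, sub_add_cancel]
  have : C * t ^ b < c * t ^ a := by
    rw [hsplit, ← mul_assoc]
    exact mul_lt_mul_of_pos_right ((div_lt_iff₀' hc).1 htC) (Real.rpow_pos_of_pos ht0 b)
  exact (h t ht1).not_gt this

lemma measure_le_sum_of_subset_biUnion {α ι : Type*} [MeasurableSpace α] (μ : Measure α)
    {S : Set α} {s : Finset ι} {U : ι → Set α} [DecidablePred fun i => (U i ∩ S).Nonempty]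
    (hS : S ⊆ ⋃ i ∈ s, U i) :
    μ S ≤ ∑ i ∈ s with (U i ∩ S).Nonempty, μ (U i) := by
  calc μ S ≤ μ (⋃ i ∈ s.filter fun i => (U i ∩ S).Nonempty, U i) := by
        refine measure_mono fun z hz => ?_
        obtain ⟨i, hi, hzi⟩ := mem_iUnion₂.1 (hS hz)
        exact mem_iUnion₂.2 ⟨i, Finset.mem_filter.2 ⟨hi, z, hzi, hz⟩, hzi⟩
    _ ≤ _ := measure_biUnion_finset_le _ _

section QuasiMetric

variable {X : Type*} (ρ : X → X → ℝ)

lemma qball_mono (x : X) {r R : ℝ} (h : r ≤ R) : qball ρ x r ⊆ qball ρ x R :=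
  fun _ hy => lt_of_lt_of_le hy h

lemma qball_subset_qball_of_inter_nonempty {A₀ : ℝ} (hA₀ : 0 < A₀)
    (hρsymm : ∀ x y, ρ x y = ρ y x) (hρtri : ∀ x y z, ρ x y ≤ A₀ * (ρ x z + ρ z y))
    {x y : X} {r R : ℝ} (hrR : r ≤ R) (hxy : (qball ρ y r ∩ qball ρ x R).Nonempty) :
    qball ρ y R ⊆ qball ρ x (A₀ * (2 * A₀ + 1) * R) := by
  obtain ⟨w, hwy : ρ y w < r, hwx : ρ x w < R⟩ := hxy
  have hdist : ρ x y < 2 * A₀ * R := by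
    have hsum : ρ x w + ρ w y < 2 * R := by linarith [hρsymm w y]
    nlinarith [hρtri x y w]
  intro z (hz : ρ y z < R)
  have hsum : ρ x y + ρ y z < (2 * A₀ + 1) * R := by linarith
  show ρ x z < _
  nlinarith [hρtri x z y]

variable [MeasurableSpace X] {μ : Measure X}

lemma measure_qball_two_pow_mul_le {Cd : ℝ≥0}
    (hCd : ∀ x r, 0 < r → μ (qball ρ x (2 * r)) ≤ Cd * μ (qball ρ x r))
    (n : ℕ) (x : X) {r : ℝ} (hr : 0 < r) :
    μ (qball ρ x (2 ^ n * r)) ≤ Cd ^ n * μ (qball ρ x r) := by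
  induction n with
  | zero => simp
  | succ n ih =>
    calc μ (qball ρ x (2 ^ (n + 1) * r)) = μ (qball ρ x (2 * (2 ^ n * r))) := by ring_nf
      _ ≤ Cd * μ (qball ρ x (2 ^ n * r)) := hCd x _ (by positivity)
      _ ≤ Cd * (Cd ^ n * μ (qball ρ x r)) := by gcongr
      _ = Cd ^ (n + 1) * μ (qball ρ x r) := by ring

lemma exists_measure_qball_mul_le
    (hdoub : ∃ Cd : ℝ≥0, ∀ x r, 0 < r → μ (qball ρ x (2 * r)) ≤ Cd * μ (qball ρ x r))
    (K : ℝ) : ∃ C : ℝ≥0, ∀ x r, 0 < r → μ (qball ρ x (K * r)) ≤ C * μ (qball ρ x r) := by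
  obtain ⟨Cd, hCd⟩ := hdoub
  obtain ⟨n, hn⟩ := pow_unbounded_of_one_lt K one_lt_two
  refine ⟨Cd ^ n, fun x r hr => ?_⟩
  calc μ (qball ρ x (K * r)) ≤ μ (qball ρ x (2 ^ n * r)) :=
        measure_mono (qball_mono ρ x (by gcongr))
    _ ≤ _ := by simpa using measure_qball_two_pow_mul_le ρ hCd n x hr

lemma ofReal_rpow_mul_measure_qball_le {A₀ : ℝ} (hA₀ : 0 < A₀)
    (hρsymm : ∀ x y, ρ x y = ρ y x) (hρtri : ∀ x y z, ρ x y ≤ A₀ * (ρ x z + ρ z y))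
    {C : ℝ≥0}
    (hC : ∀ x r, 0 < r → μ (qball ρ x (A₀ * (2 * A₀ + 1) * r)) ≤ C * μ (qball ρ x r))
    {d cl : ℝ} (hlow : ∀ x r R, 0 < r → r ≤ R →
      ENNReal.ofReal (cl * (R / r) ^ d) * μ (qball ρ x r) ≤ μ (qball ρ x R))
    {x : X} {t : ℝ} (ht : 1 ≤ t) {s : Finset X} (hs : qball ρ x t ⊆ ⋃ y ∈ s, qball ρ y 1) :
    ENNReal.ofReal (cl * t ^ d) * μ (qball ρ x t) ≤ s.card * (C * μ (qball ρ x t)) := by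
  classical
  calc ENNReal.ofReal (cl * t ^ d) * μ (qball ρ x t)
      ≤ ENNReal.ofReal (cl * t ^ d) *
          ∑ y ∈ s with (qball ρ y 1 ∩ qball ρ x t).Nonempty, μ (qball ρ y 1) := by
        gcongr; exact measure_le_sum_of_subset_biUnion μ hs
    _ = ∑ y ∈ s with (qball ρ y 1 ∩ qball ρ x t).Nonempty,
          ENNReal.ofReal (cl * t ^ d) * μ (qball ρ y 1) := Finset.mul_sum _ _ _
    _ ≤ ∑ _y ∈ s with (qball ρ _y 1 ∩ qball ρ x t).Nonempty, C * μ (qball ρ x t) := by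
        refine Finset.sum_le_sum fun y hy => ?_
        calc ENNReal.ofReal (cl * t ^ d) * μ (qball ρ y 1) ≤ μ (qball ρ y t) := by
              simpa using hlow y 1 t one_pos ht
          _ ≤ μ (qball ρ x (A₀ * (2 * A₀ + 1) * t)) := measure_mono <|
              qball_subset_qball_of_inter_nonempty ρ hA₀ hρsymm hρtri ht
                (Finset.mem_filter.1 hy).2
          _ ≤ C * μ (qball ρ x t) := hC x t (one_pos.trans_le ht)
    _ ≤ s.card * (C * μ (qball ρ x t)) := by
        rw [Finset.sum_const, nsmul_eq_mul]
        gcongr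
        exact Finset.filter_subset _ _

end QuasiMetric

theorem lowerDim_le_coveringDim_general {X : Type*} [MeasurableSpace X] [Nonempty X]
    (ρ : X → X → ℝ) (μ : Measure X)
    (A₀ : ℝ) (hA₀ : 1 ≤ A₀)
    (hρsymm : ∀ x y, ρ x y = ρ y x)
    (hρtri : ∀ x y z, ρ x y ≤ A₀ * (ρ x z + ρ z y))
    (hdoub : ∃ Cd : ℝ≥0, ∀ x r, 0 < r → μ (qball ρ x (2 * r)) ≤ Cd * μ (qball ρ x r))
    (hpos : ∀ x r, 0 < r → 0 < μ (qball ρ x r))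
    (hfin : ∀ x r, 0 < r → μ (qball ρ x r) < ⊤)
    (d Δ' cl Cc : ℝ) (hcl : 0 < cl)
    (hlow : ∀ x r R, 0 < r → r ≤ R →
      ENNReal.ofReal (cl * (R / r) ^ d) * μ (qball ρ x r) ≤ μ (qball ρ x R))
    (hcov : ∀ x r R, 0 < r → r ≤ R → ∃ s : Finset X,
      (s.card : ℝ) ≤ Cc * (R / r) ^ Δ' ∧ qball ρ x R ⊆ ⋃ y ∈ s, qball ρ y r) :
    d ≤ Δ' := by
  obtain ⟨x⟩ := ‹Nonempty X›
  obtain ⟨C, hC⟩ := exists_measure_qball_mul_le ρ hdoub (A₀ * (2 * A₀ + 1))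
  refine le_of_forall_one_le_mul_rpow_le hcl (C := Cc * C) fun t ht => ?_
  have ht0 : 0 < t := one_pos.trans_le ht
  obtain ⟨s, hcard, hs⟩ := hcov x 1 t one_pos ht
  rw [div_one] at hcard
  have hcardE : (s.card : ℝ≥0∞) * C = ENNReal.ofReal (s.card * C) := by simp
  have hbound : (s.card : ℝ) * C ≤ Cc * C * t ^ Δ' := by
    calc (s.card : ℝ) * C ≤ Cc * t ^ Δ' * C := by gcongr
      _ = Cc * C * t ^ Δ' := by ring
  rw [← ENNReal.ofReal_le_ofReal_iff ((by positivity : (0 : ℝ) ≤ s.card * C).trans hbound),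
    ← ENNReal.mul_le_mul_iff_left (hpos x t ht0).ne' (hfin x t ht0).ne]
  calc ENNReal.ofReal (cl * t ^ d) * μ (qball ρ x t)
      ≤ s.card * (C * μ (qball ρ x t)) :=
        ofReal_rpow_mul_measure_qball_le ρ (by linarith) hρsymm hρtri hC hlow ht hs
    _ ≤ ENNReal.ofReal (Cc * C * t ^ Δ') * μ (qball ρ x t) := by
        rw [← mul_assoc, hcardE]
        exact mul_le_mul_left (ENNReal.ofReal_le_ofReal hbound) _

/-- In a space of homogeneous type, the lower dimension `d` is at most
the covering dimension `Δ'`. -/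
theorem lowerDim_le_coveringDim {X : Type*} [MeasurableSpace X] [Nonempty X]
    (ρ : X → X → ℝ) (μ : Measure X)
    (A₀ : ℝ) (hA₀ : 1 ≤ A₀)
    (hρ0 : ∀ x y, 0 ≤ ρ x y) (hρeq : ∀ x y, ρ x y = 0 ↔ x = y)
    (hρsymm : ∀ x y, ρ x y = ρ y x)
    (hρtri : ∀ x y z, ρ x y ≤ A₀ * (ρ x z + ρ z y))
    (hdoub : ∃ Cd : ℝ≥0, ∀ x r, 0 < r → μ (qball ρ x (2 * r)) ≤ Cd * μ (qball ρ x r))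
    (hpos : ∀ x r, 0 < r → 0 < μ (qball ρ x r))
    (hfin : ∀ x r, 0 < r → μ (qball ρ x r) < ⊤)
    (d Δ' cl Cc : ℝ) (hcl : 0 < cl) (hCc : 0 < Cc)
    (hlow : ∀ x r R, 0 < r → r ≤ R →
      ENNReal.ofReal (cl * (R / r) ^ d) * μ (qball ρ x r) ≤ μ (qball ρ x R))
    (hcov : ∀ x r R, 0 < r → r ≤ R → ∃ s : Finset X,
      (s.card : ℝ) ≤ Cc * (R / r) ^ Δ' ∧ qball ρ x R ⊆ ⋃ y ∈ s, qball ρ y r) :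
    d ≤ Δ' :=
  lowerDim_le_coveringDim_general ρ μ A₀ hA₀ hρsymm hρtri hdoub hpos hfin d Δ' cl Cc hcl hlow hcov
end

section
/- Let λ ∈ (−1/2, ∞) and 0 ≤ a < b < ∞, and let μ_λ be the measure on (a,b) with density x^{2λ} dx. Then for every Lipschitz function f on (a,b), the Poincaré-type inequality ⨍_a^b ⨍_a^b |f(x) − f(y)| dμ_λ(x) dμ_λ(y) ≤ 2(b−a) ⨍_a^b |f′(z)| dμ_λ(z) holds, where ⨍ denotes the average with respect to μ_λ. -/
open Set MeasureTheory
open scoped ENNReal NNReal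

/-!
Comparing both points with a constant `c`, the double average of `|f x - f y|` is at most
`2 ⨍ |f - c| dμ_λ`. The weight `t ^ (2λ)` is monotone on `(a, b)`; let `c` be the value of `f`
at the endpoint where the weight is largest. Then `|f y - c|` is at most the integral of `|f'|`
between `y` and that endpoint, where the weight is at least `y ^ (2λ)`, so
`y ^ (2λ) |f y - c| ≤ ∫_a^b t ^ (2λ) |f' t| dt`, and integrating over `y` costs the factor
`b - a`.
-/

section PairwiseDeviation

variable {α : Type*} [MeasurableSpace α] {μ : Measure α} {f : α → ℝ}

theorem integral_integral_abs_sub_le [IsProbabilityMeasure μ] (hf : Integrable f μ) (c : ℝ) :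
    ∫ x, ∫ y, |f x - f y| ∂μ ∂μ ≤ 2 * ∫ x, |f x - c| ∂μ := by
  have hdev : Integrable (fun x => |f x - c|) μ := (hf.sub (integrable_const c)).abs
  have hinner (x : α) : ∫ y, |f x - f y| ∂μ ≤ |f x - c| + ∫ y, |f y - c| ∂μ :=
    calc ∫ y, |f x - f y| ∂μ ≤ ∫ y, (|f x - c| + |f y - c|) ∂μ :=
          integral_mono ((integrable_const _).sub hf).abs ((integrable_const _).add hdev)
            fun y => (abs_sub_le _ c _).trans_eq (by rw [abs_sub_comm c])
      _ = |f x - c| + ∫ y, |f y - c| ∂μ := by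
          rw [integral_add (integrable_const _) hdev, integral_const, probReal_univ, one_smul]
  calc ∫ x, ∫ y, |f x - f y| ∂μ ∂μ
        ≤ ∫ x, (|f x - c| + ∫ y, |f y - c| ∂μ) ∂μ :=
        integral_mono_of_nonneg (.of_forall fun x => integral_nonneg fun y => abs_nonneg _)
          (hdev.add (integrable_const _)) (.of_forall hinner)
    _ = 2 * ∫ x, |f x - c| ∂μ := by
        rw [integral_add hdev (integrable_const _), integral_const, probReal_univ, one_smul]
        ring

theorem average_average_abs_sub_le [IsFiniteMeasure μ] (hf : Integrable f μ) (c : ℝ) :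
    ⨍ x, ⨍ y, |f x - f y| ∂μ ∂μ ≤ 2 * ⨍ x, |f x - c| ∂μ := by
  rcases eq_zero_or_neZero μ with rfl | hμ
  · simp
  simp_rw [average_eq']
  exact integral_integral_abs_sub_le (hf.smul_measure (by simp [NeZero.ne μ])) c

end PairwiseDeviation

section WeightedFundamentalTheorem

variable {g w : ℝ → ℝ} {a b : ℝ}

theorem AbsolutelyContinuousOnInterval.mul_abs_sub_le_setIntegral_mul_abs_deriv
    (hg : AbsolutelyContinuousOnInterval g a b) (hab : a ≤ b) {r : ℝ} (hr : 0 ≤ r)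
    (hrw : ∀ t ∈ Ioc a b, r ≤ w t)
    (hint : IntegrableOn (fun t => w t * |deriv g t|) (Ioc a b)) :
    r * |g b - g a| ≤ ∫ t in Ioc a b, w t * |deriv g t| := by
  have hderiv : IntegrableOn (fun t => |deriv g t|) (Ioc a b) :=
    ((intervalIntegrable_iff_integrableOn_Ioc_of_le hab).1 hg.intervalIntegrable_deriv).abs
  calc r * |g b - g a| = r * |∫ t in a..b, deriv g t| := by rw [hg.integral_deriv_eq_sub]
    _ ≤ r * ∫ t in Ioc a b, |deriv g t| := by
        rw [intervalIntegral.integral_of_le hab]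
        gcongr
        exact abs_integral_le_integral_abs
    _ = ∫ t in Ioc a b, r * |deriv g t| := (integral_const_mul _ _).symm
    _ ≤ ∫ t in Ioc a b, w t * |deriv g t| :=
        setIntegral_mono_on (hderiv.const_mul r) hint measurableSet_Ioc
          fun t ht => mul_le_mul_of_nonneg_right (hrw t ht) (abs_nonneg _)

theorem setIntegral_Ioc_le_of_forall_le {F : ℝ → ℝ} (hab : a ≤ b) {C : ℝ}
    (hF : ∀ y ∈ Ioc a b, 0 ≤ F y) (hFC : ∀ y ∈ Ioc a b, F y ≤ C) :
    ∫ y in Ioc a b, F y ≤ (b - a) * C := by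
  calc ∫ y in Ioc a b, F y ≤ ∫ _ in Ioc a b, C :=
        integral_mono_of_nonneg ((ae_restrict_iff' measurableSet_Ioc).2 (.of_forall hF))
          (integrableOn_const measure_Ioc_lt_top.ne)
          ((ae_restrict_iff' measurableSet_Ioc).2 (.of_forall hFC))
    _ = (b - a) * C := by rw [setIntegral_const, Real.volume_real_Ioc_of_le hab, smul_eq_mul]

theorem setIntegral_mul_abs_deriv_mono_set {s : Set ℝ} (hs : s ⊆ Ioc a b)
    (hw0 : ∀ t ∈ Ioc a b, 0 ≤ w t)
    (hint : IntegrableOn (fun t => w t * |deriv g t|) (Ioc a b)) :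
    ∫ t in s, w t * |deriv g t| ≤ ∫ t in Ioc a b, w t * |deriv g t| :=
  setIntegral_mono_set hint
    ((ae_restrict_iff' measurableSet_Ioc).2 (.of_forall fun t ht =>
      mul_nonneg (hw0 t ht) (abs_nonneg _)))
    hs.eventuallyLE

theorem AbsolutelyContinuousOnInterval.setIntegral_mul_abs_sub_right_le_of_monotoneOn
    (hg : AbsolutelyContinuousOnInterval g a b) (hab : a ≤ b) (hw : MonotoneOn w (Ioc a b))
    (hw0 : ∀ t ∈ Ioc a b, 0 ≤ w t)
    (hint : IntegrableOn (fun t => w t * |deriv g t|) (Ioc a b)) :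
    ∫ y in Ioc a b, w y * |g y - g b| ≤ (b - a) * ∫ t in Ioc a b, w t * |deriv g t| := by
  refine setIntegral_Ioc_le_of_forall_le hab (fun y hy => mul_nonneg (hw0 y hy) (abs_nonneg _))
    fun y hy => ?_
  have hsub : Ioc y b ⊆ Ioc a b := Ioc_subset_Ioc_left hy.1.le
  have hgy : AbsolutelyContinuousOnInterval g y b :=
    hg.mono (uIcc_subset_uIcc_right (Icc_subset_uIcc (Ioc_subset_Icc_self hy)))
  calc w y * |g y - g b| = w y * |g b - g y| := by rw [abs_sub_comm]
    _ ≤ ∫ t in Ioc y b, w t * |deriv g t| :=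
        hgy.mul_abs_sub_le_setIntegral_mul_abs_deriv hy.2 (hw0 y hy)
          (fun t ht => hw hy (hsub ht) ht.1.le) (hint.mono_set hsub)
    _ ≤ ∫ t in Ioc a b, w t * |deriv g t| := setIntegral_mul_abs_deriv_mono_set hsub hw0 hint

theorem AbsolutelyContinuousOnInterval.setIntegral_mul_abs_sub_left_le_of_antitoneOn
    (hg : AbsolutelyContinuousOnInterval g a b) (hab : a ≤ b) (hw : AntitoneOn w (Ioc a b))
    (hw0 : ∀ t ∈ Ioc a b, 0 ≤ w t)
    (hint : IntegrableOn (fun t => w t * |deriv g t|) (Ioc a b)) :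
    ∫ y in Ioc a b, w y * |g y - g a| ≤ (b - a) * ∫ t in Ioc a b, w t * |deriv g t| := by
  refine setIntegral_Ioc_le_of_forall_le hab (fun y hy => mul_nonneg (hw0 y hy) (abs_nonneg _))
    fun y hy => ?_
  have hsub : Ioc a y ⊆ Ioc a b := Ioc_subset_Ioc_right hy.2
  have hgy : AbsolutelyContinuousOnInterval g a y :=
    hg.mono (uIcc_subset_uIcc_left (Icc_subset_uIcc (Ioc_subset_Icc_self hy)))
  calc w y * |g y - g a| ≤ ∫ t in Ioc a y, w t * |deriv g t| :=
        hgy.mul_abs_sub_le_setIntegral_mul_abs_deriv hy.1.le (hw0 y hy)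
          (fun t ht => hw (hsub ht) hy ht.2) (hint.mono_set hsub)
    _ ≤ ∫ t in Ioc a b, w t * |deriv g t| := setIntegral_mul_abs_deriv_mono_set hsub hw0 hint

end WeightedFundamentalTheorem

theorem LipschitzWith.exists_setIntegral_rpow_mul_abs_sub_le {g : ℝ → ℝ} {K : ℝ≥0}
    (hg : LipschitzWith K g) {p : ℝ} (hp : -1 < p) {a b : ℝ} (ha : 0 ≤ a) (hab : a ≤ b) :
    ∃ c, ∫ y in Ioc a b, y ^ p * |g y - c|
      ≤ (b - a) * ∫ t in Ioc a b, t ^ p * |deriv g t| := by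
  have hac : AbsolutelyContinuousOnInterval g a b :=
    (hg.lipschitzOnWith (s := uIcc a b)).absolutelyContinuousOnInterval
  have hw0 : ∀ t ∈ Ioc a b, 0 ≤ t ^ p := fun t ht => Real.rpow_nonneg (ha.trans ht.1.le) p
  have hint : IntegrableOn (fun t => t ^ p * |deriv g t|) (Ioc a b) :=
    ((intervalIntegrable_iff_integrableOn_Ioc_of_le hab).1
      (intervalIntegral.intervalIntegrable_rpow' hp)).mul_bdd
      (measurable_deriv g).abs.aestronglyMeasurable
      (.of_forall fun t => by simpa using norm_deriv_le_of_lipschitz hg (x₀ := t))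
  rcases le_or_gt 0 p with hp0 | hp0
  · refine ⟨g b, hac.setIntegral_mul_abs_sub_right_le_of_monotoneOn hab ?_ hw0 hint⟩
    exact fun s hs t _ hst => Real.rpow_le_rpow (ha.trans hs.1.le) hst hp0
  · refine ⟨g a, hac.setIntegral_mul_abs_sub_left_le_of_antitoneOn hab ?_ hw0 hint⟩
    exact fun s hs t _ hst => Real.rpow_le_rpow_of_nonpos (ha.trans_lt hs.1) hst hp0.le

noncomputable def besselMeasure (lam : ℝ) : Measure ℝ :=
  volume.withDensity fun t => ENNReal.ofReal (t ^ (2 * lam))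

theorem setIntegral_besselMeasure (lam : ℝ) {s : Set ℝ} (hs : MeasurableSet s)
    (hs0 : s ⊆ Ici 0) (φ : ℝ → ℝ) :
    ∫ x in s, φ x ∂besselMeasure lam = ∫ x in s, x ^ (2 * lam) * φ x := by
  rw [besselMeasure, setIntegral_withDensity_eq_setIntegral_toReal_smul (by fun_prop)
    (.of_forall fun _ => ENNReal.ofReal_lt_top) φ hs]
  refine setIntegral_congr_fun hs fun x hx => ?_
  rw [ENNReal.toReal_ofReal (Real.rpow_nonneg (hs0 hx) _), smul_eq_mul]

theorem besselMeasure_Ioo_lt_top {lam : ℝ} (hlam : -1/2 < lam) (a b : ℝ) :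
    besselMeasure lam (Ioo a b) < ∞ := by
  rw [besselMeasure, withDensity_apply _ measurableSet_Ioo]
  exact ((intervalIntegral.intervalIntegrable_rpow' (by linarith)).def'.mono_set
    (Ioo_subset_Ioc_self.trans Ioc_subset_uIoc)).lintegral_lt_top

theorem LipschitzWith.setAverage_setAverage_abs_sub_le_besselMeasure {g : ℝ → ℝ} {K : ℝ≥0}
    (hg : LipschitzWith K g) {lam : ℝ} (hlam : -1/2 < lam) {a b : ℝ} (ha : 0 ≤ a)
    (hab : a ≤ b) :
    ⨍ x in Ioo a b, ⨍ y in Ioo a b, |g x - g y| ∂besselMeasure lam ∂besselMeasure lam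
      ≤ 2 * (b - a) * ⨍ z in Ioo a b, |deriv g z| ∂besselMeasure lam := by
  have hfin := besselMeasure_Ioo_lt_top hlam a b
  have : IsFiniteMeasure ((besselMeasure lam).restrict (Ioo a b)) :=
    isFiniteMeasure_restrict.2 hfin.ne
  have hint : IntegrableOn g (Ioo a b) (besselMeasure lam) := by
    obtain ⟨C, hC⟩ := (hg.isBounded_image (Metric.isBounded_Ioo a b)).exists_norm_le
    exact Measure.integrableOn_of_bounded hfin.ne hg.continuous.aestronglyMeasurable
      ((ae_restrict_iff' measurableSet_Ioo).2
        (.of_forall fun y hy => hC _ (mem_image_of_mem g hy)))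
  obtain ⟨c, hc⟩ :=
    hg.exists_setIntegral_rpow_mul_abs_sub_le (p := 2 * lam) (by linarith) ha hab
  have hIoo : Ioo a b ⊆ Ici 0 := fun y hy => ha.trans hy.1.le
  have hdev : ∫ x in Ioo a b, |g x - c| ∂besselMeasure lam
      ≤ (b - a) * ∫ z in Ioo a b, |deriv g z| ∂besselMeasure lam := by
    rw [setIntegral_besselMeasure lam measurableSet_Ioo hIoo,
      setIntegral_besselMeasure lam measurableSet_Ioo hIoo,
      ← integral_Ioc_eq_integral_Ioo, ← integral_Ioc_eq_integral_Ioo]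
    exact hc
  calc ⨍ x in Ioo a b, ⨍ y in Ioo a b, |g x - g y| ∂besselMeasure lam ∂besselMeasure lam
      ≤ 2 * ⨍ x in Ioo a b, |g x - c| ∂besselMeasure lam := average_average_abs_sub_le hint c
    _ ≤ 2 * ((b - a) * ⨍ z in Ioo a b, |deriv g z| ∂besselMeasure lam) := by
        gcongr 2 * ?_
        rw [setAverage_eq, setAverage_eq, smul_eq_mul, smul_eq_mul, mul_left_comm]
        exact mul_le_mul_of_nonneg_left hdev (by positivity)
    _ = 2 * (b - a) * ⨍ z in Ioo a b, |deriv g z| ∂besselMeasure lam := by ring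

/-- Poincaré-type inequality for the one-dimensional Bessel measure `x^{2λ} dx` on `(a,b)`:
for every Lipschitz function `f` on `(a,b)`,
`⨍⨍ |f(x) − f(y)| dμ_λ dμ_λ ≤ 2(b−a) ⨍ |f′| dμ_λ`. -/
theorem bessel_poincare_one_dim (lam : ℝ) (hlam : -1/2 < lam)
    (a b : ℝ) (ha : 0 ≤ a) (hab : a < b)
    (f : ℝ → ℝ) (K : ℝ≥0) (hf : LipschitzOnWith K f (Set.Ioo a b)) :
    (⨍ x in Set.Ioo a b,
        (⨍ y in Set.Ioo a b, |f x - f y|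
          ∂(MeasureTheory.volume.withDensity fun t => ENNReal.ofReal (t ^ (2 * lam))))
        ∂(MeasureTheory.volume.withDensity fun t => ENNReal.ofReal (t ^ (2 * lam))))
      ≤ 2 * (b - a) *
        ⨍ z in Set.Ioo a b, |derivWithin f (Set.Ioo a b) z|
          ∂(MeasureTheory.volume.withDensity fun t => ENNReal.ofReal (t ^ (2 * lam))) := by
  obtain ⟨g, hg, hfg⟩ := hf.extend_real
  calc _ = ⨍ x in Ioo a b, ⨍ y in Ioo a b, |g x - g y| ∂besselMeasure lam
            ∂besselMeasure lam :=
        setAverage_congr_fun measurableSet_Ioo (.of_forall fun x hx =>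
          setAverage_congr_fun measurableSet_Ioo (.of_forall fun y hy => by rw [hfg hx, hfg hy]))
    _ ≤ 2 * (b - a) * ⨍ z in Ioo a b, |deriv g z| ∂besselMeasure lam :=
        hg.setAverage_setAverage_abs_sub_le_besselMeasure hlam ha hab.le
    _ = _ := by
        congr 1
        refine setAverage_congr_fun measurableSet_Ioo (.of_forall fun z hz => ?_)
        rw [derivWithin_congr hfg (hfg hz), derivWithin_of_isOpen isOpen_Ioo hz]
end

section
/- For λ ∈ (−1/2, ∞), x ≥ 0, and 0 < r ≤ R < ∞, the Bessel measure μ_λ with density t^{2λ} dt on [0,∞) satisfies (R/r)^{1−2λ_−} ≲ μ_λ(B(x,R))/μ_λ(B(x,r)) ≲ (R/r)^{1+2λ_+}, where λ_+ = max(λ,0) and λ_− = max(−λ,0), with implied constants depending only on λ. -/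
/-!
With `b = 2λ > -1`, the mass of `B(x, r)` is comparable to `r (x + r)^b` uniformly in `x ≥ 0`,
`r > 0`. From below, the ball contains `(x + r/2, x + r)`, on which `t ≍ x + r`. From above, if
`x ≤ 2r` the ball lies in `(0, x + r)`, of mass `(x + r)^(b+1)/(b+1) ≤ 3r (x + r)^b/(b+1)`;
otherwise `t ≍ x + r` on the whole ball. For `r ≤ R` one has
`x + r ≤ x + R ≤ (R/r)(x + r)`, so `(x + R)^b / (x + r)^b` lies between `(R/r)^(min b 0)` and
`(R/r)^(max b 0)`, which gives the two exponents.
-/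

open Set MeasureTheory

open Real

/-- `μ_λ(B(x, r))` for the exponent `b = 2λ`. -/
noncomputable def besselMass (b x r : ℝ) : ℝ :=
  ∫ t in Ioo (max (x - r) 0) (x + r), t ^ b

noncomputable def besselMassModel (b x r : ℝ) : ℝ := r * (x + r) ^ b

lemma integrableOn_rpow_Ioo {b : ℝ} (hb : -1 < b) (p q : ℝ) :
    IntegrableOn (fun t : ℝ => t ^ b) (Ioo p q) := by
  rcases le_or_gt p q with hpq | hqp
  · exact (intervalIntegrable_iff_integrableOn_Ioo_of_le hpq).1
      (intervalIntegral.intervalIntegrable_rpow' hb)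
  · simp [Ioo_eq_empty hqp.not_gt]

lemma setIntegral_Ioo_zero_rpow {b : ℝ} (hb : -1 < b) {T : ℝ} (hT : 0 ≤ T) :
    ∫ t in Ioo 0 T, t ^ b = T ^ (b + 1) / (b + 1) := by
  rw [← integral_Ioc_eq_integral_Ioo, ← intervalIntegral.integral_of_le hT,
    integral_rpow (Or.inl hb), zero_rpow (by linarith), sub_zero]

section RpowComparison

variable {a A k b s : ℝ}

lemma rpow_le_mul_rpow_of_le_mul (ha : 0 < a) (haA : a ≤ A) (hAk : A ≤ k * a) (hbs : b ≤ s)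
    (hs : 0 ≤ s) : A ^ b ≤ k ^ s * a ^ b := by
  have hk : 1 ≤ k := le_of_mul_le_mul_right (by linarith) ha
  rcases le_total 0 b with hb | hb
  · calc A ^ b ≤ (k * a) ^ b := rpow_le_rpow (by linarith) hAk hb
      _ = k ^ b * a ^ b := mul_rpow (by linarith) ha.le
      _ ≤ k ^ s * a ^ b := by gcongr
  · calc A ^ b ≤ a ^ b := rpow_le_rpow_of_nonpos ha haA hb
      _ ≤ k ^ s * a ^ b := le_mul_of_one_le_left (by positivity) (one_le_rpow hk hs)

lemma rpow_le_mul_rpow_swap_of_le_mul (ha : 0 < a) (haA : a ≤ A) (hAk : A ≤ k * a)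
    (hbs : -b ≤ s) (hs : 0 ≤ s) : a ^ b ≤ k ^ s * A ^ b := by
  have hk : 1 ≤ k := le_of_mul_le_mul_right (by linarith) ha
  rcases le_total 0 b with hb | hb
  · calc a ^ b ≤ A ^ b := rpow_le_rpow ha.le haA hb
      _ ≤ k ^ s * A ^ b :=
          le_mul_of_one_le_left (rpow_nonneg (by linarith) b) (one_le_rpow hk hs)
  · calc a ^ b = k ^ (-b) * (k * a) ^ b := by
          rw [mul_rpow (by linarith) ha.le, ← mul_assoc, ← rpow_add (by linarith),
            neg_add_cancel, rpow_zero, one_mul]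
      _ ≤ k ^ s * A ^ b := by
          gcongr ?_ * ?_
          · exact rpow_le_rpow_of_exponent_le hk (by linarith)
          · exact rpow_le_rpow_of_nonpos (by linarith) hAk hb

end RpowComparison

section Model

variable {b s x r R : ℝ}

lemma add_le_div_mul_add (hx : 0 ≤ x) (hr : 0 < r) (hrR : r ≤ R) :
    x + R ≤ R / r * (x + r) := by
  rw [div_mul_eq_mul_div, le_div_iff₀ hr]
  nlinarith

lemma besselMassModel_le_rpow_mul (hx : 0 ≤ x) (hr : 0 < r) (hrR : r ≤ R) (hbs : b ≤ s)
    (hs : 0 ≤ s) :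
    besselMassModel b x R ≤ (R / r) ^ (1 + s) * besselMassModel b x r := by
  have hRr : 0 < R / r := div_pos (hr.trans_le hrR) hr
  unfold besselMassModel
  calc R * (x + R) ^ b ≤ R * ((R / r) ^ s * (x + r) ^ b) := by
        refine mul_le_mul_of_nonneg_left ?_ (by linarith)
        exact rpow_le_mul_rpow_of_le_mul (by linarith) (by linarith) (add_le_div_mul_add hx hr hrR)
          hbs hs
    _ = (R / r) ^ (1 + s) * (r * (x + r) ^ b) := by
        rw [rpow_add hRr, rpow_one]
        field_simp

lemma rpow_mul_besselMassModel_le (hx : 0 ≤ x) (hr : 0 < r) (hrR : r ≤ R) (hbs : -b ≤ s)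
    (hs : 0 ≤ s) :
    (R / r) ^ (1 - s) * besselMassModel b x r ≤ besselMassModel b x R := by
  have hRr : 0 < R / r := div_pos (hr.trans_le hrR) hr
  have hcmp : (x + r) ^ b ≤ (R / r) ^ s * (x + R) ^ b :=
    rpow_le_mul_rpow_swap_of_le_mul (by linarith) (by linarith) (add_le_div_mul_add hx hr hrR)
      hbs hs
  unfold besselMassModel
  calc (R / r) ^ (1 - s) * (r * (x + r) ^ b) = R * (((R / r) ^ s)⁻¹ * (x + r) ^ b) := by
        rw [rpow_sub hRr, rpow_one]
        field_simp
    _ ≤ R * (x + R) ^ b := by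
        refine mul_le_mul_of_nonneg_left ?_ (by linarith)
        exact inv_mul_le_of_le_mul₀ (rpow_nonneg hRr.le s) (rpow_nonneg (by linarith) b) hcmp

end Model

section Mass

variable {b x r : ℝ}

lemma setIntegral_rpow_Ioo_mono (hb : -1 < b) {p p' q q' : ℝ} (hp : 0 ≤ p) (hpp' : p ≤ p')
    (hq'q : q' ≤ q) : ∫ t in Ioo p' q', t ^ b ≤ ∫ t in Ioo p q, t ^ b := by
  apply setIntegral_mono_set (integrableOn_rpow_Ioo hb p q)
  · filter_upwards [ae_restrict_mem measurableSet_Ioo] with t ht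
    exact rpow_nonneg (hp.trans ht.1.le) b
  · exact (Ioo_subset_Ioo hpp' hq'q).eventuallyLE

lemma besselMassModel_le_mul_besselMass (hb : -1 < b) (hx : 0 ≤ x) (hr : 0 < r) :
    besselMassModel b x r ≤ 2 ^ (max b 0 + 1) * besselMass b x r := by
  set s := max b 0
  have hhalf : ∫ t in Ioo (x + r / 2) (x + r), t ^ b ≤ besselMass b x r :=
    setIntegral_rpow_Ioo_mono hb (le_max_right _ _) (max_le (by linarith) (by linarith)) le_rfl
  have hpt : ∀ t ∈ Ioo (x + r / 2) (x + r), (x + r) ^ b ≤ 2 ^ s * t ^ b := fun t ht =>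
    rpow_le_mul_rpow_of_le_mul (by linarith [ht.1]) ht.2.le (by linarith [ht.1])
      (le_max_left _ _) (le_max_right _ _)
  unfold besselMassModel
  calc r * (x + r) ^ b = 2 * ∫ _ in Ioo (x + r / 2) (x + r), (x + r) ^ b := by
        rw [setIntegral_const, volume_real_Ioo_of_le (by linarith), smul_eq_mul]
        ring
    _ ≤ 2 * ∫ t in Ioo (x + r / 2) (x + r), 2 ^ s * t ^ b := by
        refine mul_le_mul_of_nonneg_left ?_ zero_le_two
        exact setIntegral_mono_on (integrableOn_const measure_Ioo_lt_top.ne)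
          ((integrableOn_rpow_Ioo hb _ _).const_mul _) measurableSet_Ioo hpt
    _ = 2 ^ (s + 1) * ∫ t in Ioo (x + r / 2) (x + r), t ^ b := by
        rw [integral_const_mul, rpow_add_one two_ne_zero]
        ring
    _ ≤ 2 ^ (s + 1) * besselMass b x r := mul_le_mul_of_nonneg_left hhalf (by positivity)

lemma besselMass_le_of_le_two_mul (hb : -1 < b) (hx : 0 ≤ x) (hr : 0 < r) (hx2r : x ≤ 2 * r) :
    besselMass b x r ≤ 3 / (b + 1) * besselMassModel b x r := by
  have hb1 : 0 < b + 1 := by linarith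
  calc besselMass b x r ≤ ∫ t in Ioo 0 (x + r), t ^ b :=
        setIntegral_rpow_Ioo_mono hb le_rfl (le_max_right _ _) le_rfl
    _ = (x + r) * (x + r) ^ b / (b + 1) := by
        rw [setIntegral_Ioo_zero_rpow hb (by linarith), rpow_add_one (by linarith), mul_comm]
    _ ≤ 3 * r * (x + r) ^ b / (b + 1) := by
        gcongr
        linarith
    _ = 3 / (b + 1) * besselMassModel b x r := by
        unfold besselMassModel
        ring

lemma besselMass_le_of_two_mul_le (hr : 0 < r) (hx2r : 2 * r ≤ x) :
    besselMass b x r ≤ 2 * 3 ^ max (-b) 0 * besselMassModel b x r := by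
  have hpt : ∀ t ∈ Ioo (x - r) (x + r), ‖t ^ b‖ ≤ 3 ^ max (-b) 0 * (x + r) ^ b := by
    intro t ht
    rw [Real.norm_of_nonneg (rpow_nonneg (by linarith [ht.1]) b)]
    exact rpow_le_mul_rpow_swap_of_le_mul (by linarith [ht.1]) ht.2.le (by linarith [ht.1])
      (le_max_left _ _) (le_max_right _ _)
  calc besselMass b x r ≤ ‖∫ t in Ioo (x - r) (x + r), t ^ b‖ := by
        rw [besselMass, max_eq_left (by linarith)]
        exact le_norm_self _
    _ ≤ 3 ^ max (-b) 0 * (x + r) ^ b * volume.real (Ioo (x - r) (x + r)) :=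
        norm_setIntegral_le_of_norm_le_const measure_Ioo_lt_top hpt
    _ = 2 * 3 ^ max (-b) 0 * besselMassModel b x r := by
        rw [volume_real_Ioo_of_le (by linarith), besselMassModel]
        ring

end Mass

section Doubling

variable {b s : ℝ}

lemma exists_besselMassModel_le_mul_besselMass (hb : -1 < b) :
    ∃ C > 0, ∀ x r, 0 ≤ x → 0 < r → besselMassModel b x r ≤ C * besselMass b x r :=
  ⟨2 ^ (max b 0 + 1), by positivity,
    fun _ _ hx hr => besselMassModel_le_mul_besselMass hb hx hr⟩

lemma exists_besselMass_le_mul_besselMassModel (hb : -1 < b) :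
    ∃ C > 0, ∀ x r, 0 ≤ x → 0 < r → besselMass b x r ≤ C * besselMassModel b x r := by
  have hb1 : 0 < b + 1 := by linarith
  refine ⟨max (3 / (b + 1)) (2 * 3 ^ max (-b) 0), by positivity, fun x r hx hr => ?_⟩
  have hmodel : 0 ≤ besselMassModel b x r := mul_nonneg hr.le (rpow_nonneg (by linarith) b)
  rcases le_total x (2 * r) with hx2r | h2rx
  · exact (besselMass_le_of_le_two_mul hb hx hr hx2r).trans
      (mul_le_mul_of_nonneg_right (le_max_left _ _) hmodel)
  · exact (besselMass_le_of_two_mul_le hr h2rx).trans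
      (mul_le_mul_of_nonneg_right (le_max_right _ _) hmodel)

lemma exists_mul_rpow_mul_besselMass_le (hb : -1 < b) (hbs : -b ≤ s) (hs : 0 ≤ s) :
    ∃ c > 0, ∀ x r R, 0 ≤ x → 0 < r → r ≤ R →
      c * (R / r) ^ (1 - s) * besselMass b x r ≤ besselMass b x R := by
  obtain ⟨C₁, hC₁, hmodel_le⟩ := exists_besselMassModel_le_mul_besselMass hb
  obtain ⟨C₂, hC₂, hle_model⟩ := exists_besselMass_le_mul_besselMassModel hb
  refine ⟨(C₁ * C₂)⁻¹, by positivity, fun x r R hx hr hrR => ?_⟩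
  have hk : 0 ≤ (R / r) ^ (1 - s) := rpow_nonneg (div_nonneg (hr.le.trans hrR) hr.le) _
  calc (C₁ * C₂)⁻¹ * (R / r) ^ (1 - s) * besselMass b x r
      ≤ (C₁ * C₂)⁻¹ * (R / r) ^ (1 - s) * (C₂ * besselMassModel b x r) := by
        gcongr
        exact hle_model x r hx hr
    _ = C₁⁻¹ * ((R / r) ^ (1 - s) * besselMassModel b x r) := by
        field_simp
    _ ≤ C₁⁻¹ * besselMassModel b x R := by
        gcongr
        exact rpow_mul_besselMassModel_le hx hr hrR hbs hs
    _ ≤ besselMass b x R := by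
        rw [inv_mul_le_iff₀ hC₁]
        exact hmodel_le x R hx (hr.trans_le hrR)

lemma exists_besselMass_le_mul_rpow_mul (hb : -1 < b) (hbs : b ≤ s) (hs : 0 ≤ s) :
    ∃ C > 0, ∀ x r R, 0 ≤ x → 0 < r → r ≤ R →
      besselMass b x R ≤ C * (R / r) ^ (1 + s) * besselMass b x r := by
  obtain ⟨C₁, hC₁, hmodel_le⟩ := exists_besselMassModel_le_mul_besselMass hb
  obtain ⟨C₂, hC₂, hle_model⟩ := exists_besselMass_le_mul_besselMassModel hb
  refine ⟨C₂ * C₁, by positivity, fun x r R hx hr hrR => ?_⟩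
  have hk : 0 ≤ (R / r) ^ (1 + s) := rpow_nonneg (div_nonneg (hr.le.trans hrR) hr.le) _
  calc besselMass b x R ≤ C₂ * besselMassModel b x R := hle_model x R hx (hr.trans_le hrR)
    _ ≤ C₂ * ((R / r) ^ (1 + s) * besselMassModel b x r) := by
        gcongr
        exact besselMassModel_le_rpow_mul hx hr hrR hbs hs
    _ ≤ C₂ * ((R / r) ^ (1 + s) * (C₁ * besselMass b x r)) := by
        gcongr
        exact hmodel_le x r hx hr
    _ = C₂ * C₁ * (R / r) ^ (1 + s) * besselMass b x r := by ring

end Doubling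

/-- For `λ ∈ (−1/2,∞)`, `x ≥ 0` and `0 < r ≤ R`, the one-dimensional Bessel measure
`t^{2λ} dt` satisfies `(R/r)^{1−2λ₋} ≲ μ_λ(B(x,R))/μ_λ(B(x,r)) ≲ (R/r)^{1+2λ₊}`,
with constants depending only on `λ`. -/
theorem bessel_dimension_bounds (lam : ℝ) (hlam : -1/2 < lam) :
    ∃ c C : ℝ, 0 < c ∧ 0 < C ∧ ∀ x r R : ℝ, 0 ≤ x → 0 < r → r ≤ R →
      (c * (R / r) ^ (1 - 2 * max (-lam) 0) *
          ∫ t in Set.Ioo (max (x - r) 0) (x + r), t ^ (2 * lam) ≤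
        ∫ t in Set.Ioo (max (x - R) 0) (x + R), t ^ (2 * lam)) ∧
      ((∫ t in Set.Ioo (max (x - R) 0) (x + R), t ^ (2 * lam)) ≤
        C * (R / r) ^ (1 + 2 * max lam 0) *
          ∫ t in Set.Ioo (max (x - r) 0) (x + r), t ^ (2 * lam)) := by
  have hb : -1 < 2 * lam := by linarith
  obtain ⟨c, hc, hlower⟩ := exists_mul_rpow_mul_besselMass_le (s := 2 * max (-lam) 0) hb
    (by linarith [le_max_left (-lam) 0]) (by positivity)
  obtain ⟨C, hC, hupper⟩ := exists_besselMass_le_mul_rpow_mul (s := 2 * max lam 0) hb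
    (by linarith [le_max_left lam 0]) (by positivity)
  exact ⟨c, C, hc, hC, fun x r R hx hr hrR =>
    ⟨hlower x r R hx hr hrR, hupper x r R hx hr hrR⟩⟩
end

section
/- Let 𝒟 be a system of dyadic cubes on a space of homogeneous type. Then there exists a constant c > 1 such that for every cube Q ∈ 𝒟 with Q ≠ X, the strict parent Q^{[1]} (the minimal cube strictly containing Q) satisfies c·μ(Q) ≤ μ(Q^{[1]}) ≤ C·μ(Q) for some constant C < ∞ depending only on the space. -/
open Set MeasureTheory
open scoped ENNReal NNReal

/-- A system of dyadic cubes on a quasi-metric measure space, with scale parameter `δ`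
and comparability constants `c₀ ≤ C₀`. -/
structure DyadicSystem {X : Type*} [MeasurableSpace X] (ρ : X → X → ℝ) (δ c₀ C₀ : ℝ) where
  cubes : ℤ → Set (Set X)
  measurable : ∀ k, ∀ Q ∈ cubes k, MeasurableSet Q
  covers : ∀ k, ⋃₀ cubes k = Set.univ
  pairwiseDisjoint : ∀ k, (cubes k).PairwiseDisjoint id
  refines : ∀ k, ∀ Q ∈ cubes (k + 1), ∃ R ∈ cubes k, Q ⊆ R
  comparable : ∀ k, ∀ Q ∈ cubes k, ∃ z : X,
    qball ρ z (c₀ * δ ^ k) ⊆ Q ∧ Q ⊆ qball ρ z (C₀ * δ ^ k)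

/-- Membership in the dyadic system (as a set, forgetting the generation). -/
def DyadicSystem.mem {X : Type*} [MeasurableSpace X] {ρ : X → X → ℝ} {δ c₀ C₀ : ℝ}
    (𝒟 : DyadicSystem ρ δ c₀ C₀) (Q : Set X) : Prop := ∃ k, Q ∈ 𝒟.cubes k

/-- For dyadic cubes on a space of homogeneous type, there are constants `1 < c ≤ C < ∞`
such that the strict parent `Q^{[1]}` (the minimal dyadic cube strictly containing `Q`)
of any cube `Q ≠ X` satisfies `c·μ(Q) ≤ μ(Q^{[1]}) ≤ C·μ(Q)`. -/
theorem strict_parent_measure_bounds {X : Type*} [MeasurableSpace X]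
    (ρ : X → X → ℝ) (μ : Measure X)
    (A₀ : ℝ) (hA₀ : 1 ≤ A₀)
    (hρ0 : ∀ x y, 0 ≤ ρ x y) (hρeq : ∀ x y, ρ x y = 0 ↔ x = y)
    (hρsymm : ∀ x y, ρ x y = ρ y x)
    (hρtri : ∀ x y z, ρ x y ≤ A₀ * (ρ x z + ρ z y))
    (hdoub : ∃ Cd : ℝ≥0, ∀ x r, 0 < r → μ (qball ρ x (2 * r)) ≤ Cd * μ (qball ρ x r))
    (hpos : ∀ x r, 0 < r → 0 < μ (qball ρ x r))
    (hfin : ∀ x r, 0 < r → μ (qball ρ x r) < ⊤)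
    (δ c₀ C₀ : ℝ) (hδ0 : 0 < δ) (hδ1 : δ < 1) (hc₀ : 0 < c₀) (hC₀ : c₀ ≤ C₀)
    (𝒟 : DyadicSystem ρ δ c₀ C₀) :
    ∃ c C : ℝ≥0, 1 < c ∧ ∀ Q : Set X, 𝒟.mem Q → Q ≠ Set.univ →
      ∀ Q' : Set X, 𝒟.mem Q' → Q ⊂ Q' →
        (∀ R : Set X, 𝒟.mem R → Q ⊂ R → Q' ⊆ R) →
        (c : ℝ≥0∞) * μ Q ≤ μ Q' ∧ μ Q' ≤ (C : ℝ≥0∞) * μ Q := by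
  classical
  obtain ⟨Cd, hCd⟩ := hdoub
  set D : ℝ≥0 := max Cd 1 with hDdef
  have hD1 : (1:ℝ≥0) ≤ D := le_max_right _ _
  have hA₀0 : (0:ℝ) < A₀ := lt_of_lt_of_le one_pos hA₀
  have hC₀0 : (0:ℝ) < C₀ := lt_of_lt_of_le hc₀ hC₀
  -- monotonicity of balls
  have qmono : ∀ (x : X) {r s : ℝ}, r ≤ s → qball ρ x r ⊆ qball ρ x s := by
    intro x r s h y hy
    exact lt_of_lt_of_le hy h
  -- quasi-triangle ball inclusion
  have hball : ∀ (x y : X) (a b : ℝ), ρ x y ≤ a →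
      qball ρ y b ⊆ qball ρ x (A₀ * (a + b)) := by
    intro x y a b hxy w hw
    have hw' : ρ y w < b := hw
    have := hρtri x w y
    have : ρ x w ≤ A₀ * (ρ x y + ρ y w) := this
    calc ρ x w ≤ A₀ * (ρ x y + ρ y w) := this
      _ < A₀ * (a + b) := by nlinarith
  -- doubling with constant D ≥ 1
  have hdoubD : ∀ x r, 0 < r → μ (qball ρ x (2*r)) ≤ (D:ℝ≥0∞) * μ (qball ρ x r) := by
    intro x r hr
    refine (hCd x r hr).trans ?_
    gcongr
    exact_mod_cast le_max_left Cd 1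
  have hiter : ∀ n : ℕ, ∀ x r, 0 < r →
      μ (qball ρ x (2^n * r)) ≤ (D:ℝ≥0∞)^n * μ (qball ρ x r) := by
    intro n
    induction n with
    | zero => intro x r hr; simp
    | succ n ih =>
      intro x r hr
      have h1 : (2:ℝ)^(n+1) * r = 2^n * (2*r) := by ring
      rw [h1, pow_succ]
      calc μ (qball ρ x (2^n * (2*r))) ≤ (D:ℝ≥0∞)^n * μ (qball ρ x (2*r)) :=
            ih x (2*r) (by linarith)
        _ ≤ (D:ℝ≥0∞)^n * ((D:ℝ≥0∞) * μ (qball ρ x r)) := by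
            gcongr
            exact hdoubD x r hr
        _ = (D:ℝ≥0∞)^n * (D:ℝ≥0∞) * μ (qball ρ x r) := by ring
  -- centers of cubes
  have hrpos : ∀ k : ℤ, (0:ℝ) < c₀ * δ ^ k := fun k => mul_pos hc₀ (zpow_pos hδ0 k)
  have hcenter : ∀ (k : ℤ) (Q : Set X), Q ∈ 𝒟.cubes k → ∃ z : X, z ∈ Q ∧
      qball ρ z (c₀ * δ ^ k) ⊆ Q ∧ Q ⊆ qball ρ z (C₀ * δ ^ k) := by
    intro k Q hQ
    obtain ⟨z, h1, h2⟩ := 𝒟.comparable k Q hQ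
    refine ⟨z, h1 ?_, h1, h2⟩
    show ρ z z < c₀ * δ ^ k
    rw [(hρeq z z).mpr rfl]
    exact hrpos k
  have hnonempty : ∀ (k : ℤ) (Q : Set X), Q ∈ 𝒟.cubes k → Q.Nonempty := by
    intro k Q hQ
    obtain ⟨z, hz, -, -⟩ := hcenter k Q hQ
    exact ⟨z, hz⟩
  -- uniqueness from disjointness
  have huniq : ∀ (k : ℤ) (Q R : Set X), Q ∈ 𝒟.cubes k → R ∈ 𝒟.cubes k →
      (Q ∩ R).Nonempty → Q = R := by
    intro k Q R hQ hR hQR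
    by_contra hne
    exact (hQR.mono (Set.inter_subset_inter_left R (subset_refl Q))).not_disjoint
      (𝒟.pairwiseDisjoint k hQ hR hne)
  -- ancestors
  have hanc : ∀ (n : ℕ) (k : ℤ) (Q : Set X), Q ∈ 𝒟.cubes k →
      ∃ R ∈ 𝒟.cubes (k - n), Q ⊆ R := by
    intro n
    induction n with
    | zero => intro k Q hQ; exact ⟨Q, by simpa using hQ, subset_refl Q⟩
    | succ n ih =>
      intro k Q hQ
      obtain ⟨R, hR, hQR⟩ := ih k Q hQ
      have hR' : R ∈ 𝒟.cubes ((k - (n+1:ℕ)) + 1) := by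
        have : ((k - (n+1:ℕ)) + 1 : ℤ) = k - n := by push_cast; ring
        rw [this]; exact hR
      obtain ⟨R', hR'2, hRR'⟩ := 𝒟.refines (k - (n+1:ℕ)) R hR'
      exact ⟨R', hR'2, hQR.trans hRR'⟩
  -- choose N
  obtain ⟨N, hN⟩ : ∃ N : ℕ, A₀ * (2*A₀*C₀ + C₀) ≤ 2^N * (c₀ * δ) := by
    obtain ⟨N, hN⟩ := pow_unbounded_of_one_lt ((A₀ * (2*A₀*C₀ + C₀)) / (c₀ * δ)) one_lt_two
    refine ⟨N, ?_⟩
    have hcd : (0:ℝ) < c₀ * δ := mul_pos hc₀ hδ0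
    rw [div_lt_iff₀ hcd] at hN
    linarith
  set E : ℝ≥0∞ := (D:ℝ≥0∞)^N with hEdef
  have hE0 : E ≠ 0 := by
    apply pow_ne_zero
    simp only [ne_eq, ENNReal.coe_eq_zero]
    exact ne_of_gt (lt_of_lt_of_le one_pos hD1)
  have hEtop : E ≠ ⊤ := ENNReal.pow_ne_top ENNReal.coe_ne_top
  refine ⟨1 + (D^N)⁻¹, D^N, ?_, ?_⟩
  · have : (0:ℝ≥0) < (D^N)⁻¹ := by
      rw [inv_pos]
      exact pow_pos (lt_of_lt_of_le one_pos hD1) N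
    exact lt_add_of_pos_right 1 this
  intro Q hQ hQuniv Q' hQ' hsub hmin
  obtain ⟨k, hQk⟩ := hQ
  obtain ⟨k', hQ'k⟩ := hQ'
  -- Step A : k' < k
  have hklt : k' < k := by
    by_contra h
    push_neg at h
    obtain ⟨R, hR, hQ'R⟩ := hanc (k' - k).toNat k' Q' hQ'k
    have hidx : (k' - ((k' - k).toNat : ℤ)) = k := by omega
    rw [hidx] at hR
    have : Q = R := huniq k Q R hQk hR
      ((hnonempty k Q hQk).mono (Set.subset_inter (subset_refl Q) (hsub.1.trans hQ'R)))
    exact hsub.2 (this ▸ hQ'R)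
  -- find the strict parent's level
  set P : ℕ → Prop := fun n => ∃ R, R ∈ 𝒟.cubes (k - 1 - n) ∧ Q ⊂ R with hPdef
  have hPex : P (k - 1 - k').toNat := by
    obtain ⟨R, hR, hQR⟩ := hanc (k - k').toNat k Q hQk
    have hidx : (k - ((k - k').toNat : ℤ)) = k' := by omega
    rw [hidx] at hR
    have hRQ' : R = Q' := huniq k' R Q' hR hQ'k
      ((hnonempty k Q hQk).mono (Set.subset_inter hQR hsub.1))
    refine ⟨R, ?_, hRQ' ▸ hsub⟩
    have : (k - 1 - ((k - 1 - k').toNat : ℤ)) = k' := by omega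
    rw [this]; exact hR
  have hPex' : ∃ n, P n := ⟨_, hPex⟩
  set n₀ : ℕ := Nat.find hPex' with hn₀def
  obtain ⟨R₀, hR₀, hQR₀⟩ : P n₀ := Nat.find_spec hPex'
  set j : ℤ := k - 1 - n₀ with hjdef
  have hn₀le : n₀ ≤ (k - 1 - k').toNat := Nat.find_le hPex
  have hk'j : k' ≤ j := by simp only [hjdef]; omega
  -- Q' = R₀
  have hQ'R₀ : Q' = R₀ := by
    have h1 : Q' ⊆ R₀ := hmin R₀ ⟨j, hR₀⟩ hQR₀
    have h2 : R₀ ⊆ Q' := by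
      obtain ⟨S, hS, hRS⟩ := hanc (j - k').toNat j R₀ hR₀
      have hidx : (j - ((j - k').toNat : ℤ)) = k' := by omega
      rw [hidx] at hS
      have : S = Q' := huniq k' S Q' hS hQ'k
        ((hnonempty k Q hQk).mono (Set.subset_inter (hQR₀.1.trans hRS) hsub.1))
      exact this ▸ hRS
    exact le_antisymm h1 h2
  have hQ'j : Q' ∈ 𝒟.cubes j := hQ'R₀ ▸ hR₀
  -- Q ∈ cubes (j+1)
  have hQj1 : Q ∈ 𝒟.cubes (j + 1) := by
    rcases Nat.eq_zero_or_pos n₀ with h0 | hpos'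
    · have : (j + 1 : ℤ) = k := by simp only [hjdef, h0]; omega
      rw [this]; exact hQk
    · obtain ⟨m, hm⟩ := Nat.exists_eq_succ_of_ne_zero (Nat.pos_iff_ne_zero.mp hpos')
      obtain ⟨R', hR', hQR'⟩ := hanc (m + 1) k Q hQk
      have hidx : (k - ((m + 1 : ℕ) : ℤ)) = j + 1 := by
        simp only [hjdef, hm]; push_cast; ring
      rw [hidx] at hR'
      have hnotP : ¬ P m := Nat.find_min hPex' (by omega)
      have hne : Q = R' := by
        by_contra hne
        apply hnotP
        refine ⟨R', ?_, ssubset_of_subset_of_ne hQR' hne⟩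
        have : (k - 1 - (m:ℤ)) = j + 1 := by simp only [hjdef, hm]; push_cast; ring
        rw [this]; exact hR'
      exact hne ▸ hR'
  -- centers
  obtain ⟨z, hzQ, hzin, hzout⟩ := hcenter (j+1) Q hQj1
  obtain ⟨z', hz'Q', hz'in, hz'out⟩ := hcenter j Q' hQ'j
  have hδj : (0:ℝ) < δ ^ j := zpow_pos hδ0 j
  have hδj1 : δ ^ (j+1) = δ ^ j * δ := by
    rw [zpow_add_one₀ (ne_of_gt hδ0)]
  have hrad : (0:ℝ) < c₀ * δ ^ (j+1) := hrpos (j+1)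
  -- distance z' to z
  have hz'z : ρ z' z < C₀ * δ ^ j := hz'out (hsub.1 hzQ)
  constructor
  · -- lower bound
    obtain ⟨x, hxQ', hxQ⟩ := exists_of_ssubset hsub
    have hxU : x ∈ ⋃₀ 𝒟.cubes (j+1) := by rw [𝒟.covers (j+1)]; trivial
    obtain ⟨S, hS, hxS⟩ := hxU
    have hSQ' : S ⊆ Q' := by
      obtain ⟨R, hR, hSR⟩ := 𝒟.refines j S hS
      have : R = Q' := huniq j R Q' hR hQ'j ⟨x, hSR hxS, hxQ'⟩
      exact this ▸ hSR
    have hSQ : S ≠ Q := fun h => hxQ (h ▸ hxS)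
    have hdisj : Disjoint Q S := 𝒟.pairwiseDisjoint (j+1) hQj1 hS (Ne.symm hSQ)
    obtain ⟨w, hwS, hwin, hwout⟩ := hcenter (j+1) S hS
    -- μ Q ≤ E * μ S
    have hwz : ρ w z ≤ 2 * A₀ * C₀ * δ ^ j := by
      have h1 : ρ w z' < C₀ * δ ^ j := by
        rw [hρsymm w z']
        exact hz'out (hSQ' hwS)
      have h2 : ρ z' z < C₀ * δ ^ j := hz'z
      have := hρtri w z z'
      nlinarith
    have hincl : qball ρ z (C₀ * δ ^ (j+1)) ⊆ qball ρ w (2^N * (c₀ * δ ^ (j+1))) := by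
      refine (hball w z (2 * A₀ * C₀ * δ ^ j) (C₀ * δ ^ (j+1)) hwz).trans (qmono w ?_)
      have h2N : (1:ℝ) ≤ 2^N := one_le_pow₀ (by norm_num)
      have key : A₀ * (2 * A₀ * C₀ * δ ^ j + C₀ * δ ^ (j+1)) ≤ 2^N * (c₀ * δ ^ (j+1)) := by
        rw [hδj1]
        have hδle : C₀ * (δ ^ j * δ) ≤ C₀ * δ ^ j := by
          have := mul_le_of_le_one_right (mul_pos hC₀0 hδj).le hδ1.le
          nlinarith
        have : A₀ * (2 * A₀ * C₀ * δ ^ j + C₀ * (δ ^ j * δ)) ≤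
            A₀ * (2*A₀*C₀ + C₀) * δ ^ j := by nlinarith
        calc A₀ * (2 * A₀ * C₀ * δ ^ j + C₀ * (δ ^ j * δ)) ≤ A₀ * (2*A₀*C₀ + C₀) * δ ^ j := this
          _ ≤ 2^N * (c₀ * δ) * δ ^ j := by nlinarith
          _ = 2^N * (c₀ * (δ ^ j * δ)) := by ring
      exact key
    have hQleES : μ Q ≤ E * μ S := by
      calc μ Q ≤ μ (qball ρ z (C₀ * δ ^ (j+1))) := measure_mono hzout
        _ ≤ μ (qball ρ w (2^N * (c₀ * δ ^ (j+1)))) := measure_mono hincl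
        _ ≤ E * μ (qball ρ w (c₀ * δ ^ (j+1))) := hiter N w _ hrad
        _ ≤ E * μ S := mul_le_mul_right (measure_mono hwin) E
    have hSge : E⁻¹ * μ Q ≤ μ S := by
      calc E⁻¹ * μ Q ≤ E⁻¹ * (E * μ S) := by gcongr
        _ = μ S := by rw [← mul_assoc, ENNReal.inv_mul_cancel hE0 hEtop, one_mul]
    have hcoe : ((1 + (D^N)⁻¹ : ℝ≥0) : ℝ≥0∞) = 1 + E⁻¹ := by
      push_cast
      rw [ENNReal.coe_inv (by positivity), ENNReal.coe_pow]
    rw [hcoe]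
    calc (1 + E⁻¹) * μ Q = μ Q + E⁻¹ * μ Q := by rw [add_mul, one_mul]
      _ ≤ μ Q + μ S := by gcongr
      _ = μ (Q ∪ S) := (measure_union hdisj (𝒟.measurable (j+1) S hS)).symm
      _ ≤ μ Q' := measure_mono (Set.union_subset hsub.1 hSQ')
  · -- upper bound
    have hzz' : ρ z z' ≤ C₀ * δ ^ j := by rw [hρsymm]; exact le_of_lt hz'z
    have hincl : qball ρ z' (C₀ * δ ^ j) ⊆ qball ρ z (2^N * (c₀ * δ ^ (j+1))) := by
      refine (hball z z' (C₀ * δ ^ j) (C₀ * δ ^ j) hzz').trans (qmono z ?_)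
      have : A₀ * (C₀ * δ ^ j + C₀ * δ ^ j) ≤ 2^N * (c₀ * δ ^ (j+1)) := by
        rw [hδj1]
        have key : 2 * A₀ * C₀ ≤ 2^N * (c₀ * δ) := by
          nlinarith [mul_nonneg (mul_nonneg (sub_nonneg.mpr hA₀) hA₀0.le) hC₀0.le,
            mul_pos hA₀0 hC₀0]
        calc A₀ * (C₀ * δ ^ j + C₀ * δ ^ j) = (2 * A₀ * C₀) * δ ^ j := by ring
          _ ≤ (2^N * (c₀ * δ)) * δ ^ j := by nlinarith
          _ = 2^N * (c₀ * (δ ^ j * δ)) := by ring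
      exact this
    have hcoe : ((D^N : ℝ≥0) : ℝ≥0∞) = E := by rw [ENNReal.coe_pow]
    rw [hcoe]
    calc μ Q' ≤ μ (qball ρ z' (C₀ * δ ^ j)) := measure_mono hz'out
      _ ≤ μ (qball ρ z (2^N * (c₀ * δ ^ (j+1)))) := measure_mono hincl
      _ ≤ E * μ (qball ρ z (c₀ * δ ^ (j+1))) := hiter N z _ hrad
      _ ≤ E * μ Q := mul_le_mul_right (measure_mono hzin) E
end
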